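/- arXiv:2509.11001 — 2 statements merged into one kernel-verified Lean document; each statement's English description precedes it below -/
import Mathlib

section
/- Let n be a natural number with prime factorisation n = p_1^{α_1} ⋯ p_t^{α_t} (the p_i distinct primes). Then every skew brace of order n is trivial (i.e., a ∘ b = a + b for all a, b) if and only if α_i = 1 for every i and p_i does not divide p_j − 1 for all i ≠ j. -/
/-!
In a skew brace `A`, `λ_a(b) = -a + a ∘ b` defines a homomorphism from `(A, ∘)` to `Aut(A, +)`,
and `a ∘ b = a + b` says `λ_a = 1`. The arithmetic condition on `n` forces `gcd(n, φ(n)) = 1`,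
and then every group of order `n` is cyclic: `n` is squarefree, so the commutator subgroup is
cyclic, and conjugation acts trivially on it because its automorphism group has order dividing
`φ(n)`; so the group is abelian, and abelian of squarefree order means cyclic. Hence
`|Aut(A, +)| = φ(n)` is prime to `n = |(A, ∘)|`, and `λ` is trivial.

Conversely, if `p² ∣ n` then `a ∘ b = a + b + p a b` is a nontrivial brace on `ℤ/p²`, and if
`p ∣ q - 1` then `a ∘ b = b + a` is a nontrivial brace on the nonabelian group `ℤ/q ⋊ ℤ/p`;
a direct product with any brace of order `n / p²`, resp. `n / pq`, stays nontrivial.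
-/

/-- A skew (left) brace: a set with two group structures `(A,+)` and `(A,∘)`
(the latter written multiplicatively) satisfying
`a ∘ (b + c) = a ∘ b - a + a ∘ c`. -/
class SkewBrace (A : Type*) extends AddGroup A, Group A where
  skew_left_distrib : ∀ a b c : A, a * (b + c) = a * b - a + a * c

theorem MonoidHom.apply_eq_one_of_coprime_card {G H : Type*} [Group G] [Group H] (f : G →* H)
    (h : (Nat.card G).Coprime (Nat.card H)) (g : G) : f g = 1 :=
  orderOf_eq_one_iff.mp <| Nat.eq_one_of_dvd_coprimes h
    ((orderOf_map_dvd f g).trans (orderOf_dvd_natCard g)) (orderOf_dvd_natCard (f g))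

namespace Nat

theorem squarefree_of_coprime_totient {n : ℕ} (h : n.Coprime n.totient) : Squarefree n := by
  refine Nat.squarefree_iff_prime_squarefree.mpr fun p hp hpp => hp.one_lt.ne' ?_
  have hφ : p ∣ (p * p).totient := by
    rw [← sq, Nat.totient_prime_pow_succ hp, pow_one]
    exact dvd_mul_right p _
  exact Nat.eq_one_of_dvd_coprimes h ((dvd_mul_right p p).trans hpp)
    (hφ.trans (Nat.totient_dvd_of_dvd hpp))

theorem coprime_totient_of_factorization_eq_one {n : ℕ} (hn : n ≠ 0)
    (h1 : ∀ p ∈ n.primeFactors, n.factorization p = 1)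
    (h2 : ∀ p ∈ n.primeFactors, ∀ q ∈ n.primeFactors, p ≠ q → ¬ p ∣ q - 1) :
    n.Coprime n.totient := by
  have htotient : n.totient = ∏ q ∈ n.primeFactors, (q - 1) := by
    rw [Nat.totient_eq_prod_factorization hn, Finsupp.prod, Nat.support_factorization]
    refine Finset.prod_congr rfl fun q hq => ?_
    rw [h1 q hq, Nat.sub_self, pow_zero, one_mul]
  refine Nat.coprime_of_dvd fun r hr hrn hrφ => ?_
  rw [htotient] at hrφ
  obtain ⟨q, hq, hrq⟩ := (Prime.dvd_finsetProd_iff hr.prime _).mp hrφ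
  have hq_one : 1 < q := (Nat.prime_of_mem_primeFactors hq).one_lt
  have hr_lt : r < q := by
    have := Nat.le_of_dvd (by omega) hrq
    omega
  exact h2 r (Nat.mem_primeFactors.mpr ⟨hr, hrn, hn⟩) q hq hr_lt.ne hrq

end Nat

open Subgroup in
theorem isCyclic_of_coprime_card_totient {G : Type*} [Group G] [Finite G]
    (h : (Nat.card G).Coprime (Nat.card G).totient) : IsCyclic G := by
  have : IsZGroup G := IsZGroup.of_squarefree (Nat.squarefree_of_coprime_totient h)
  have := IsZGroup.isCyclic_commutator (G := G)
  have hcop : (Nat.card G).Coprime (Nat.card (MulAut (commutator G))) := by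
    rw [IsCyclic.card_mulAut]
    exact h.coprime_dvd_right (Nat.totient_dvd_of_dvd (card_subgroup_dvd_card _))
  have hcentral : (Abelianization.of : G →* _).ker ≤ center G := by
    rw [Abelianization.ker_of]
    intro c hc
    refine mem_center_iff.mpr fun g => ?_
    have := congrArg Subtype.val <|
      DFunLike.congr_fun (MulAut.conjNormal.apply_eq_one_of_coprime_card hcop g) ⟨c, hc⟩
    rw [MulAut.conjNormal_apply, MulAut.one_apply] at this
    exact (eq_mul_inv_iff_mul_eq.mp this.symm).symm
  let _ : CommGroup G := commGroupOfCyclicCenterQuotient _ hcentral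
  exact IsCyclic.of_exponent_eq_card (IsZGroup.exponent_eq_card G)

namespace SkewBrace

variable {A : Type*} [SkewBrace A]

theorem one_eq_zero : (1 : A) = 0 := by
  have h := skew_left_distrib (1 : A) 0 0
  simp only [add_zero, one_mul, zero_sub] at h
  simpa using h

protected theorem mul_neg (a b : A) : a * -b = a - a * b + a := by
  have h := skew_left_distrib a b (-b)
  rw [add_neg_cancel, ← one_eq_zero, mul_one] at h
  rw [← neg_add_cancel_left (a * b - a) (a * -b), ← h, neg_sub]

def lambdaAut (a : A) : AddAut A where
  toFun b := -a + a * b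
  invFun b := a⁻¹ * (a + b)
  left_inv b := by simp
  right_inv b := by simp
  map_add' b c := by simp [skew_left_distrib, sub_eq_add_neg, add_assoc]

theorem lambdaAut_apply (a b : A) : lambdaAut a b = -a + a * b := rfl

-- `AddAut A` is an additive group, with composition written `+`.
def lambdaHom : A →* Multiplicative (AddAut A) where
  toFun a := .ofAdd (lambdaAut a)
  map_one' := by
    ext b
    simp [lambdaAut_apply, one_eq_zero]
  map_mul' a b := by
    ext c
    simp [lambdaAut_apply, skew_left_distrib, SkewBrace.mul_neg, mul_assoc, sub_eq_add_neg,
      add_assoc]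

theorem mul_eq_add_of_coprime_card_addAut (h : (Nat.card A).Coprime (Nat.card (AddAut A)))
    (a b : A) : a * b = a + b := by
  have hlam : lambdaAut a = 0 := ofAdd_eq_one.mp (lambdaHom.apply_eq_one_of_coprime_card h a)
  have hb : -a + a * b = b := DFunLike.congr_fun hlam b
  rw [← add_neg_cancel_left a (a * b), hb]

theorem mul_eq_add_of_coprime_card_totient [Finite A]
    (h : (Nat.card A).Coprime (Nat.card A).totient) (a b : A) : a * b = a + b := by
  have : IsCyclic (Multiplicative A) := isCyclic_of_coprime_card_totient h
  have hAut : Nat.card (AddAut A) = (Nat.card A).totient :=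
    (Nat.card_congr (MulAutMultiplicative A).toEquiv).symm.trans (IsCyclic.card_mulAut _)
  exact mul_eq_add_of_coprime_card_addAut (hAut ▸ h) a b

end SkewBrace

instance SkewBrace.instProd {A B : Type*} [SkewBrace A] [SkewBrace B] : SkewBrace (A × B) where
  skew_left_distrib a b c :=
    Prod.ext (SkewBrace.skew_left_distrib a.1 b.1 c.1) (SkewBrace.skew_left_distrib a.2 b.2 c.2)

def AlmostTrivialBrace (G : Type*) : Type _ := Additive G

namespace AlmostTrivialBrace

variable {G : Type*}

def ofGroup : G ≃ AlmostTrivialBrace G := Additive.ofMul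

instance [Finite G] : Finite (AlmostTrivialBrace G) := Finite.of_equiv G ofGroup

theorem card : Nat.card (AlmostTrivialBrace G) = Nat.card G := Nat.card_congr ofGroup.symm

variable [Group G]

instance : AddGroup (AlmostTrivialBrace G) := inferInstanceAs (AddGroup (Additive G))

instance : Group (AlmostTrivialBrace G) where
  mul a b := b + a
  mul_assoc a b c := (add_assoc c b a).symm
  one := 0
  one_mul := add_zero
  mul_one := zero_add
  inv a := -a
  inv_mul_cancel := add_neg_cancel

theorem mul_def (a b : AlmostTrivialBrace G) : a * b = b + a := rfl

instance : SkewBrace (AlmostTrivialBrace G) where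
  skew_left_distrib a b c := by simp [mul_def, sub_eq_add_neg, add_assoc]

theorem ofGroup_mul_ne_add {x y : G} (h : ¬ Commute x y) :
    ofGroup x * ofGroup y ≠ ofGroup x + ofGroup y :=
  fun hxy => h (congrArg Additive.toMul hxy).symm

end AlmostTrivialBrace

/-- `a ∘ b = a + b + t a b` for `t * t = 0`: since `(1 + t a)(1 + t b) = 1 + t (a ∘ b)`, the map
`a ↦ 1 + t a` identifies `(R, ∘)` with the multiplicative group `1 + t R`. -/
def SquareZeroBrace {R : Type*} (_t : R) : Type _ := R

namespace SquareZeroBrace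

variable {R : Type*} (t : R)

def ofRing : R ≃ SquareZeroBrace t := Equiv.refl _

instance [Finite R] : Finite (SquareZeroBrace t) := Finite.of_equiv R (ofRing t)

theorem card : Nat.card (SquareZeroBrace t) = Nat.card R := Nat.card_congr (ofRing t).symm

variable [CommRing R]

instance : AddGroup (SquareZeroBrace t) := inferInstanceAs (AddGroup R)

instance [ht : Fact (t * t = 0)] : Group (SquareZeroBrace t) where
  mul := show R → R → R from fun a b => a + b + t * a * b
  mul_assoc := show ∀ a b c : R, a + b + t * a * b + c + t * (a + b + t * a * b) * c =
      a + (b + c + t * b * c) + t * a * (b + c + t * b * c) from fun _ _ _ => by ring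
  one := show R from 0
  one_mul := show ∀ a : R, 0 + a + t * 0 * a = a from fun _ => by ring
  mul_one := show ∀ a : R, a + 0 + t * a * 0 = a from fun _ => by ring
  inv := show R → R from fun a => -a + t * a ^ 2
  inv_mul_cancel := show ∀ a : R, -a + t * a ^ 2 + a + t * (-a + t * a ^ 2) * a = 0
    from fun a => by linear_combination a ^ 3 * ht.out

instance [Fact (t * t = 0)] : SkewBrace (SquareZeroBrace t) where
  skew_left_distrib := show ∀ a b c : R,
      a + (b + c) + t * a * (b + c) = a + b + t * a * b - a + (a + c + t * a * c)
    from fun _ _ _ => by ring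

theorem ofRing_one_mul_ne_add [Fact (t * t = 0)] (ht : t ≠ 0) :
    ofRing t 1 * ofRing t 1 ≠ ofRing t 1 + ofRing t 1 := by
  intro h
  change (1 + 1 + t * 1 * 1 : R) = 1 + 1 at h
  exact ht (by linear_combination h)

end SquareZeroBrace

theorem SemidirectProduct.not_commute_inl_inr {N H : Type*} [Group N] [Group H]
    {φ : H →* MulAut N} {n : N} {h : H} (hn : φ h n ≠ n) :
    ¬ Commute (inl n : N ⋊[φ] H) (inr h) := by
  intro hc
  have := congrArg SemidirectProduct.left hc.eq
  simp only [mul_left, left_inl, right_inl, left_inr, map_one, mul_one, one_mul] at this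
  exact hn this.symm

def AllSkewBracesTrivial (n : ℕ) : Prop :=
  ∀ (A : Type) [Fintype A] [SkewBrace A], Fintype.card A = n → ∀ a b : A, a * b = a + b

namespace AllSkewBracesTrivial

variable {n : ℕ}

theorem mul_eq_add (h : AllSkewBracesTrivial n) (A : Type) [Finite A] [SkewBrace A]
    (hA : Nat.card A = n) (a b : A) : a * b = a + b :=
  have := Fintype.ofFinite A
  h A (Nat.card_eq_fintype_card (α := A) ▸ hA) a b

theorem of_dvd (h : AllSkewBracesTrivial n) (hn : n ≠ 0) {d : ℕ} (hd : d ∣ n) :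
    AllSkewBracesTrivial d := by
  obtain ⟨m, rfl⟩ := hd
  have : NeZero m := ⟨right_ne_zero_of_mul hn⟩
  intro A _ _ hA a b
  have := h.mul_eq_add (A × AlmostTrivialBrace (Multiplicative (ZMod m)))
    (by rw [Nat.card_prod, AlmostTrivialBrace.card, Nat.card_eq_fintype_card, hA]; simp)
    (a, 1) (b, 1)
  exact congrArg Prod.fst this

end AllSkewBracesTrivial

theorem not_allSkewBracesTrivial_card_of_not_commute {G : Type} [Group G] [Finite G] {x y : G}
    (hxy : ¬ Commute x y) : ¬ AllSkewBracesTrivial (Nat.card G) := fun h =>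
  AlmostTrivialBrace.ofGroup_mul_ne_add hxy <| h.mul_eq_add _ AlmostTrivialBrace.card _ _

theorem not_allSkewBracesTrivial_sq {p : ℕ} (hp : 2 ≤ p) : ¬ AllSkewBracesTrivial (p ^ 2) := by
  have : NeZero (p ^ 2) := ⟨by positivity⟩
  have : Fact ((p : ZMod (p ^ 2)) * p = 0) := ⟨by rw [← Nat.cast_mul, ← sq, ZMod.natCast_self]⟩
  have hp0 : (p : ZMod (p ^ 2)) ≠ 0 := by
    rw [ne_eq, ZMod.natCast_eq_zero_iff]
    exact fun hdvd => by nlinarith [Nat.le_of_dvd (by omega) hdvd]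
  intro h
  exact SquareZeroBrace.ofRing_one_mul_ne_add _ hp0 <|
    h.mul_eq_add _ ((SquareZeroBrace.card _).trans (Nat.card_zmod _)) _ _

theorem not_allSkewBracesTrivial_card_mul_of_dvd_card_mulAut (N : Type) [Group N] [Finite N]
    {p : ℕ} [Fact p.Prime] (hp : p ∣ Nat.card (MulAut N)) :
    ¬ AllSkewBracesTrivial (Nat.card N * p) := by
  obtain ⟨σ, hσ⟩ := exists_prime_orderOf_dvd_card' p hp
  obtain ⟨n, hn⟩ : ∃ n : N, σ n ≠ n := by
    by_contra! h
    have hσ1 : σ = 1 := MulEquiv.ext h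
    exact (Fact.out : p.Prime).one_lt.ne' (by rw [← hσ, hσ1, orderOf_one])
  let H := Subgroup.zpowers σ
  have : Finite (N ⋊[H.subtype] H) := Finite.of_equiv _ SemidirectProduct.equivProd.symm
  have hcard : Nat.card (N ⋊[H.subtype] H) = Nat.card N * p := by
    rw [SemidirectProduct.card, Nat.card_zpowers, hσ]
  exact hcard ▸ not_allSkewBracesTrivial_card_of_not_commute
    (SemidirectProduct.not_commute_inl_inr (h := ⟨σ, Subgroup.mem_zpowers σ⟩) hn)

theorem not_allSkewBracesTrivial_mul_of_dvd_sub_one {p q : ℕ} [Fact p.Prime] (hq : q.Prime)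
    (hpq : p ∣ q - 1) : ¬ AllSkewBracesTrivial (q * p) := by
  have : NeZero q := ⟨hq.ne_zero⟩
  have hN : Nat.card (Multiplicative (ZMod q)) = q := Nat.card_zmod q
  refine hN ▸ not_allSkewBracesTrivial_card_mul_of_dvd_card_mulAut (Multiplicative (ZMod q)) ?_
  rwa [IsCyclic.card_mulAut, hN, Nat.totient_prime hq]

namespace AllSkewBracesTrivial

variable {n : ℕ}

theorem factorization_eq_one (h : AllSkewBracesTrivial n) (hn : n ≠ 0) {p : ℕ}
    (hp : p ∈ n.primeFactors) : n.factorization p = 1 := by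
  have hp' := Nat.prime_of_mem_primeFactors hp
  by_contra hne
  have hsq : p ^ 2 ∣ n := (hp'.pow_dvd_iff_le_factorization hn).mpr <| by
    have := hp'.factorization_pos_of_dvd hn (Nat.dvd_of_mem_primeFactors hp)
    omega
  exact not_allSkewBracesTrivial_sq hp'.two_le (h.of_dvd hn hsq)

theorem not_dvd_sub_one (h : AllSkewBracesTrivial n) (hn : n ≠ 0) {p q : ℕ}
    (hp : p ∈ n.primeFactors) (hq : q ∈ n.primeFactors) (hpq : p ≠ q) : ¬ p ∣ q - 1 := by
  have hp' := Nat.prime_of_mem_primeFactors hp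
  have hq' := Nat.prime_of_mem_primeFactors hq
  have : Fact p.Prime := ⟨hp'⟩
  have hqp : q * p ∣ n := ((Nat.coprime_primes hq' hp').mpr hpq.symm).mul_dvd_of_dvd_of_dvd
    (Nat.dvd_of_mem_primeFactors hq) (Nat.dvd_of_mem_primeFactors hp)
  exact fun hdvd => not_allSkewBracesTrivial_mul_of_dvd_sub_one hq' hdvd (h.of_dvd hn hqp)

end AllSkewBracesTrivial

/-- **Theorem A (2)⇔(3)'s content**: every skew brace of order `n` is trivial
(`a ∘ b = a + b`) if and only if `n` is square-free and `p ∤ q - 1` for all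
distinct primes `p, q` dividing `n`. -/
theorem every_skewBrace_is_trivial_iff (n : ℕ) (hn : 0 < n) :
    (∀ (A : Type) [Fintype A] [SkewBrace A], Fintype.card A = n →
      (∀ a b : A, a * b = a + b)) ↔
    ((∀ p ∈ n.primeFactors, n.factorization p = 1) ∧
      (∀ p ∈ n.primeFactors, ∀ q ∈ n.primeFactors, p ≠ q → ¬ p ∣ q - 1)) := by
  change AllSkewBracesTrivial n ↔ _
  constructor
  · intro h
    exact ⟨fun p hp => h.factorization_eq_one hn.ne' hp,
      fun p hp q hq hpq => h.not_dvd_sub_one hn.ne' hp hq hpq⟩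
  · rintro ⟨h1, h2⟩ A _ _ hA
    refine SkewBrace.mul_eq_add_of_coprime_card_totient ?_
    rw [Nat.card_eq_fintype_card, hA]
    exact Nat.coprime_totient_of_factorization_eq_one hn.ne' h1 h2
end

section
/- Let B = (B,+) be an abelian group, C = (C,·) a group, and φ, γ, ψ : C → Aut(B) group homomorphisms (write φ_c, γ_c, ψ_c for the images of c). Define on B × C the operations (b_1,c_1) + (b_2,c_2) = (b_1 + φ_{c_1}(b_2), c_1c_2) and ((φ_{c_1}γ_{c_1})(b_1), c_1) ∘ ((φ_{c_2}γ_{c_2})(b_2), c_2) = ((φ_{c_1c_2}γ_{c_1c_2})(ψ_{c_2}^{-1}(b_1) + b_2), c_1c_2) for all b_1,b_2 ∈ B and c_1,c_2 ∈ C. Then (B × C, +, ∘) is a skew brace if and only if the relations φ_c γ_{c'} = γ_{c'} φ_c and φ_{c'}(γ_{cc'} ψ_{cc'}^{-1} − γ_{c'} ψ_{c'}^{-1}) = γ_c ψ_c^{-1} − id_B hold for all c, c' ∈ C, where products and differences of automorphisms are taken in the endomorphism ring of the abelian group B. -/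
/-- `(A, add, mul)` with the indicated identities and inverse maps is a skew
(left) brace: both operations are group operations and the skew left
distributivity `a ∘ (b + c) = a ∘ b - a + a ∘ c` holds. -/
def IsSkewBrace {A : Type*} (add : A → A → A) (zero : A) (neg : A → A)
    (mul : A → A → A) (one : A) (inv : A → A) : Prop :=
  (∀ a b c : A, add (add a b) c = add a (add b c)) ∧
  (∀ a : A, add zero a = a) ∧ (∀ a : A, add a zero = a) ∧
  (∀ a : A, add (neg a) a = zero) ∧ (∀ a : A, add a (neg a) = zero) ∧
  (∀ a b c : A, mul (mul a b) c = mul a (mul b c)) ∧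
  (∀ a : A, mul one a = a) ∧ (∀ a : A, mul a one = a) ∧
  (∀ a : A, mul (inv a) a = one) ∧ (∀ a : A, mul a (inv a) = one) ∧
  (∀ a b c : A, mul a (add b c) = add (add (mul a b) (neg a)) (mul a c))

/-- The (multiplicative) group structure on `AddAut A` that Mathlib had at the time
(composition as multiplication); current Mathlib makes `AddAut A` an additive group. -/
instance AddAut.group (A : Type*) [Add A] : Group (AddAut A) where
  mul g h := AddEquiv.trans h g
  one := AddEquiv.refl _
  inv := AddEquiv.symm
  mul_assoc _ _ _ := rfl
  one_mul _ := rfl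
  mul_one _ := rfl
  inv_mul_cancel := AddEquiv.self_trans_symm

variable {B C : Type*} [AddCommGroup B] [Group C]

/-- The addition `(b₁,c₁) + (b₂,c₂) = (b₁ + φ_{c₁}(b₂), c₁c₂)` on `B × C`. -/
def sbAdd (φ : C →* AddAut B) : B × C → B × C → B × C :=
  fun p q => (p.1 + φ p.2 q.1, p.2 * q.2)

/-- The multiplication on `B × C` determined by
`((φ_{c₁}γ_{c₁})(b₁), c₁) ∘ ((φ_{c₂}γ_{c₂})(b₂), c₂)
  = ((φ_{c₁c₂}γ_{c₁c₂})(ψ_{c₂}⁻¹(b₁) + b₂), c₁c₂)`. -/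
def sbMul2 (φ γ ψ : C →* AddAut B) : B × C → B × C → B × C :=
  fun p q =>
    (φ (p.2 * q.2) (γ (p.2 * q.2)
      ((ψ q.2).symm ((γ p.2).symm ((φ p.2).symm p.1)) +
        (γ q.2).symm ((φ q.2).symm q.1))),
     p.2 * q.2)

/-!
Both operations are group laws whatever φ, γ, ψ are: `+` is the semidirect product `B ⋊_φ C`,
and `∘` is the law `(b₁, c₁) · (b₂, c₂) = (ψ_{c₂}⁻¹ b₁ + b₂, c₁c₂)` transported along
`(b, c) ↦ ((φ_c γ_c) b, c)`. Associativity of `+` forces the negation in any skew brace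
structure to be the semidirect one, so everything hinges on skew distributivity.
At `((0, c'), (φ_c b, 1), (0, c))` it is the commutation `φ_c γ_{c'} = γ_{c'} φ_c`, and at
`((b, 1), (0, c), (0, c'))` it is `φ_c` applied to the second relation. Conversely, once φ and γ
commute, distributivity at `((φ_c γ_c) u, c), (b₁, c₁), (b₂, c₂)` reduces to the second relation
at `(c₁, c₂, u)`, transported by `φ_c φ_{c₁} γ_c`.
-/

namespace AddAut

variable {A : Type*} [Add A]

@[simp] lemma group_mul_apply (g h : AddAut A) (a : A) : (g * h) a = g (h a) := rfl

@[simp] lemma group_one_apply (a : A) : (1 : AddAut A) a = a := rfl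

@[simp] lemma symm_eq_inv (g : AddAut A) : g.symm = g⁻¹ := rfl

@[simp] lemma group_apply_inv_apply (g : AddAut A) (a : A) : g (g⁻¹ a) = a :=
  g.apply_symm_apply a

@[simp] lemma group_inv_apply_apply (g : AddAut A) (a : A) : g⁻¹ (g a) = a :=
  g.symm_apply_apply a

end AddAut

lemma neg_unique_of_add_assoc {A : Type*} {add : A → A → A} {zero e : A} {neg neg' : A → A}
    (assoc : ∀ a b c, add (add a b) c = add a (add b c)) (zero_add : ∀ a, add zero a = a)
    (neg_add : ∀ a, add (neg a) a = zero) (add_e : ∀ a, add a e = a)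
    (add_neg' : ∀ a, add a (neg' a) = e) : neg = neg' := by
  funext a
  calc neg a = add (neg a) (add a (neg' a)) := by rw [add_neg', add_e]
    _ = neg' a := by rw [← assoc, neg_add, zero_add]

section SecondConstruction

variable (φ γ ψ : C →* AddAut B)

def sbNeg : B × C → B × C := fun p => (-(φ p.2)⁻¹ p.1, p.2⁻¹)

def sbInv2 : B × C → B × C :=
  fun p => ((φ p.2)⁻¹ ((γ p.2)⁻¹ (-ψ p.2 ((γ p.2)⁻¹ ((φ p.2)⁻¹ p.1)))), p.2⁻¹)

lemma sbAdd_assoc (p q r : B × C) : sbAdd φ (sbAdd φ p q) r = sbAdd φ p (sbAdd φ q r) := by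
  simp [sbAdd, mul_assoc, add_assoc]

lemma zero_sbAdd (p : B × C) : sbAdd φ (0, 1) p = p := by
  simp [sbAdd]

lemma sbAdd_zero (p : B × C) : sbAdd φ p (0, 1) = p := by
  simp [sbAdd]

lemma sbNeg_sbAdd (p : B × C) : sbAdd φ (sbNeg φ p) p = (0, 1) := by
  simp [sbAdd, sbNeg]

lemma sbAdd_sbNeg (p : B × C) : sbAdd φ p (sbNeg φ p) = (0, 1) := by
  simp [sbAdd, sbNeg]

lemma sbMul2_assoc (p q r : B × C) :
    sbMul2 φ γ ψ (sbMul2 φ γ ψ p q) r = sbMul2 φ γ ψ p (sbMul2 φ γ ψ q r) := by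
  simp [sbMul2, mul_assoc, add_assoc]

lemma one_sbMul2 (p : B × C) : sbMul2 φ γ ψ (0, 1) p = p := by
  simp [sbMul2]

lemma sbMul2_one (p : B × C) : sbMul2 φ γ ψ p (0, 1) = p := by
  simp [sbMul2]

lemma sbInv2_sbMul2 (p : B × C) : sbMul2 φ γ ψ (sbInv2 φ γ ψ p) p = (0, 1) := by
  simp [sbMul2, sbInv2]

lemma sbMul2_sbInv2 (p : B × C) : sbMul2 φ γ ψ p (sbInv2 φ γ ψ p) = (0, 1) := by
  simp [sbMul2, sbInv2]

lemma sbMul2_sbAdd_of_relations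
    (hcomm : ∀ (c c' : C) (b : B), φ c (γ c' b) = γ c' (φ c b))
    (hrel : ∀ (c c' : C) (b : B),
      φ c' (γ (c * c') ((ψ (c * c')).symm b) - γ c' ((ψ c').symm b)) = γ c ((ψ c).symm b) - b)
    (p q r : B × C) :
    sbMul2 φ γ ψ p (sbAdd φ q r) =
      sbAdd φ (sbAdd φ (sbMul2 φ γ ψ p q) (sbNeg φ p)) (sbMul2 φ γ ψ p r) := by
  have hcomm_inv : ∀ (c c' : C) (b : B), (φ c)⁻¹ (γ c' b) = γ c' ((φ c)⁻¹ b) := fun c c' b =>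
    (φ c).symm_apply_eq.mpr (by rw [hcomm]; simp)
  obtain ⟨a, c⟩ := p
  obtain ⟨b₁, c₁⟩ := q
  obtain ⟨b₂, c₂⟩ := r
  obtain ⟨u, rfl⟩ : ∃ u, a = φ c (γ c u) := ⟨(γ c)⁻¹ ((φ c)⁻¹ a), by simp⟩
  have key := congrArg (fun x => φ c (φ c₁ (γ c x))) (hrel c₁ c₂ u)
  simp only [sbMul2, sbAdd, sbNeg, Prod.mk.injEq]
  refine ⟨?_, by group⟩
  simp only [map_mul, map_inv, mul_inv_rev, map_add, map_sub, map_neg, AddAut.symm_eq_inv,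
    AddAut.group_mul_apply, AddAut.group_inv_apply_apply, AddAut.group_apply_inv_apply,
    hcomm, hcomm_inv] at key ⊢
  rw [sub_eq_iff_eq_add.mp key]
  abel

lemma sbMul2_sbAdd_iff :
    (∀ p q r : B × C, sbMul2 φ γ ψ p (sbAdd φ q r) =
      sbAdd φ (sbAdd φ (sbMul2 φ γ ψ p q) (sbNeg φ p)) (sbMul2 φ γ ψ p r)) ↔
    (∀ (c c' : C) (b : B), φ c (γ c' b) = γ c' (φ c b)) ∧
      (∀ (c c' : C) (b : B),
        φ c' (γ (c * c') ((ψ (c * c')).symm b) - γ c' ((ψ c').symm b)) =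
          γ c ((ψ c).symm b) - b) := by
  refine ⟨fun hd => ⟨fun c c' b => ?_, fun c c' b => ?_⟩,
    fun ⟨hcomm, hrel⟩ => sbMul2_sbAdd_of_relations φ γ ψ hcomm hrel⟩
  · simpa [sbMul2, sbAdd, sbNeg] using congrArg Prod.fst (hd (0, c') (φ c b, 1) (0, c))
  · have e := congrArg Prod.fst (hd (b, 1) (0, c) (0, c'))
    simp only [sbMul2, sbAdd, sbNeg, map_mul, map_one, map_zero, map_neg, mul_inv_rev, inv_one,
      one_mul, mul_one, add_zero, AddAut.symm_eq_inv, AddAut.group_one_apply,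
      AddAut.group_mul_apply] at e
    apply (φ c).injective
    simp only [map_mul, mul_inv_rev, map_sub, AddAut.symm_eq_inv, AddAut.group_mul_apply, e,
      add_sub_cancel_right]
    abel

end SecondConstruction

/-- **Theorem 3.3 (second construction)**: `(B × C, +, ∘)` is a skew brace if
and only if `φ_c γ_{c'} = γ_{c'} φ_c` and
`φ_{c'}(γ_{cc'} ψ_{cc'}⁻¹ - γ_{c'} ψ_{c'}⁻¹) = γ_c ψ_c⁻¹ - id` for all
`c, c' ∈ C`. -/
theorem second_construction_isSkewBrace_iff (φ γ ψ : C →* AddAut B) :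
    (∃ (zero : B × C) (neg : B × C → B × C) (one : B × C)
        (inv : B × C → B × C),
      IsSkewBrace (sbAdd φ) zero neg (sbMul2 φ γ ψ) one inv) ↔
    ((∀ (c c' : C) (b : B), φ c (γ c' b) = γ c' (φ c b)) ∧
      (∀ (c c' : C) (b : B),
        φ c' (γ (c * c') ((ψ (c * c')).symm b) - γ c' ((ψ c').symm b)) =
          γ c ((ψ c).symm b) - b)) := by
  refine ⟨?_, fun h => ?_⟩
  · rintro ⟨zero, neg, one, inv, hassoc, hzero, -, hneg, -, -, -, -, -, -, hdistrib⟩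
    obtain rfl : neg = sbNeg φ :=
      neg_unique_of_add_assoc hassoc hzero hneg (sbAdd_zero φ) (sbAdd_sbNeg φ)
    exact (sbMul2_sbAdd_iff φ γ ψ).mp hdistrib
  · exact ⟨(0, 1), sbNeg φ, (0, 1), sbInv2 φ γ ψ, sbAdd_assoc φ, zero_sbAdd φ, sbAdd_zero φ,
      sbNeg_sbAdd φ, sbAdd_sbNeg φ, sbMul2_assoc φ γ ψ, one_sbMul2 φ γ ψ, sbMul2_one φ γ ψ,
      sbInv2_sbMul2 φ γ ψ, sbMul2_sbInv2 φ γ ψ, (sbMul2_sbAdd_iff φ γ ψ).mpr h⟩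
end
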